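/- arXiv:2604.24809 — 2 statements merged into one kernel-verified Lean document; each statement's English description precedes it below -/
import Mathlib

section
/- Let h_1, …, h_t be pairwise distinct vectors in ℝ^d. For every index j ∈ {1, …, t} and every σ > 0, the Gaussian-regularized readout satisfies the exact closed form (4πσ)^{d/2} ∫_{ℝ^d} S(θ) · conj(w_j(θ)) · e^{−σ‖θ‖²} dθ = Σ_{k=1}^{t} h_k · exp(−‖h_k − h_j‖² / (4σ)), where the integral is taken componentwise in ℂ^d. -/
open MeasureTheory Real Filter RealInnerProductSpace

/-- The derivative characteristic summary `S(θ) = (i/t) ∑ₖ hₖ e^{i⟨θ,hₖ⟩}` (componentwise). -/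
noncomputable def seqSummary {d t : ℕ} (h : Fin t → EuclideanSpace ℝ (Fin d))
    (θ : EuclideanSpace ℝ (Fin d)) : Fin d → ℂ :=
  fun l => (Complex.I / (t : ℂ)) *
    ∑ k, (h k l : ℂ) * Complex.exp (Complex.I * (⟪θ, h k⟫ : ℝ))

/-- The spectral query `w_j(θ) = (i t/(2π)^d) e^{i⟨θ,h_j⟩}`. -/
noncomputable def spectralQuery {d t : ℕ} (h : Fin t → EuclideanSpace ℝ (Fin d))
    (j : Fin t) (θ : EuclideanSpace ℝ (Fin d)) : ℂ :=
  (Complex.I * (t : ℂ) / ((2 * Real.pi) ^ d : ℝ)) *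
    Complex.exp (Complex.I * (⟪θ, h j⟫ : ℝ))

/-- **Gaussian-regularized readout, exact closed form.**
For pairwise distinct `h₁, …, h_t ∈ ℝ^d`, every `j` and every `σ > 0`,
`(4πσ)^{d/2} ∫ S(θ) * conj (w_j θ) * e^{−σ‖θ‖²} dθ
  = ∑ₖ hₖ * exp (−‖hₖ − h_j‖²/(4σ))`, componentwise in `ℂ^d`. -/
theorem gaussian_regularized_readout_closed_form
    (d t : ℕ) (ht : 0 < t) (h : Fin t → EuclideanSpace ℝ (Fin d))
    (hdist : Function.Injective h) (j : Fin t) (σ : ℝ) (hσ : 0 < σ) :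
    (((4 * Real.pi * σ) ^ ((d : ℝ) / 2) : ℝ) •
      ∫ θ : EuclideanSpace ℝ (Fin d),
        (fun l : Fin d =>
          seqSummary h θ l * (starRingEnd ℂ) (spectralQuery h j θ) *
            (Real.exp (-σ * ‖θ‖ ^ 2) : ℂ)))
      = fun l : Fin d =>
          ∑ k, (h k l : ℂ) * (Real.exp (-‖h k - h j‖ ^ 2 / (4 * σ)) : ℂ) := by

  classical
  have ht0 : (t : ℂ) ≠ 0 := Nat.cast_ne_zero.mpr ht.ne'
  have hb : (0:ℝ) < ((σ:ℂ)).re := by simpa using hσ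
  have hC : ((((2 * Real.pi) ^ d : ℝ)):ℂ) ≠ 0 :=
    Complex.ofReal_ne_zero.mpr (by positivity)
  have hEint : ∀ k : Fin t, Integrable (fun θ : EuclideanSpace ℝ (Fin d) =>
      Complex.exp (-(σ:ℂ) * (‖θ‖:ℂ)^2 + Complex.I * ((⟪h k - h j, θ⟫ : ℝ) : ℂ))) :=
    fun k => GaussianFourier.integrable_cexp_neg_mul_sq_norm_add hb Complex.I (h k - h j)
  have hrw : (fun θ : EuclideanSpace ℝ (Fin d) =>
      (fun l : Fin d => seqSummary h θ l * (starRingEnd ℂ) (spectralQuery h j θ) *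
        (Real.exp (-σ * ‖θ‖ ^ 2) : ℂ)))
    = fun θ => ((((2 * Real.pi) ^ d : ℝ) : ℂ))⁻¹ •
        ∑ k, Complex.exp (-(σ:ℂ) * (‖θ‖:ℂ)^2 + Complex.I * ((⟪h k - h j, θ⟫ : ℝ) : ℂ)) •
          (fun l : Fin d => (h k l : ℂ)) := by
    funext θ
    funext l
    simp only [seqSummary, spectralQuery, Pi.smul_apply, Finset.sum_apply, smul_eq_mul,
      map_mul, map_div₀, Complex.conj_I, Complex.conj_ofReal, map_natCast]
    rw [← Complex.exp_conj]
    simp only [map_mul, Complex.conj_I, Complex.conj_ofReal]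
    rw [Finset.mul_sum, Finset.sum_mul, Finset.sum_mul, Finset.mul_sum]
    refine Finset.sum_congr rfl fun k _ => ?_
    have hinner : (⟪h k - h j, θ⟫ : ℝ) = ⟪θ, h k⟫ - ⟪θ, h j⟫ := by
      rw [inner_sub_left, real_inner_comm (h k) θ, real_inner_comm (h j) θ]
    have hexp : Complex.exp (Complex.I * ((⟪θ, h k⟫ : ℝ):ℂ)) *
        Complex.exp (-Complex.I * ((⟪θ, h j⟫ : ℝ):ℂ)) * (Real.exp (-σ * ‖θ‖ ^ 2) : ℂ)
        = Complex.exp (-(σ:ℂ) * (‖θ‖:ℂ)^2 + Complex.I * ((⟪h k - h j, θ⟫ : ℝ) : ℂ)) := by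
      rw [Complex.ofReal_exp, ← Complex.exp_add, ← Complex.exp_add, hinner]
      congr 1
      push_cast
      ring
    have hconst : Complex.I / (t:ℂ) * (-Complex.I * (t:ℂ) / ((((2*Real.pi)^d:ℝ)):ℂ))
        = ((((2*Real.pi)^d:ℝ)):ℂ)⁻¹ := by
      rw [show Complex.I / (t:ℂ) * (-Complex.I * (t:ℂ) / ((((2*Real.pi)^d:ℝ)):ℂ))
          = (-(Complex.I*Complex.I)) * ((t:ℂ)/(t:ℂ)) / ((((2*Real.pi)^d:ℝ)):ℂ) by ring,
        Complex.I_mul_I, div_self ht0]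
      simp [one_div]
    linear_combination ((h k l : ℂ) * Complex.exp (Complex.I * ((⟪θ, h k⟫ : ℝ):ℂ)) *
        Complex.exp (-Complex.I * ((⟪θ, h j⟫ : ℝ):ℂ)) * (Real.exp (-σ * ‖θ‖ ^ 2) : ℂ)) * hconst
      + ((((2*Real.pi)^d:ℝ)):ℂ)⁻¹ * (h k l : ℂ) * hexp
  rw [hrw, integral_smul, integral_finset_sum _ (fun k _ => (hEint k).smul_const _)]
  have hval : ∀ k : Fin t, (∫ θ : EuclideanSpace ℝ (Fin d),
        Complex.exp (-(σ:ℂ) * (‖θ‖:ℂ)^2 + Complex.I * ((⟪h k - h j, θ⟫ : ℝ) : ℂ)))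
      = ((((Real.pi / σ) ^ ((d:ℝ)/2) : ℝ)):ℂ) * (Real.exp (-‖h k - h j‖^2 / (4*σ)) : ℂ) := by
    intro k
    rw [GaussianFourier.integral_cexp_neg_mul_sq_norm_add hb Complex.I (h k - h j),
      finrank_euclideanSpace_fin]
    congr 1
    · rw [Complex.ofReal_cpow (by positivity : (0:ℝ) ≤ Real.pi / σ)]
      push_cast
      ring_nf
    · rw [Complex.ofReal_exp]
      congr 1
      rw [Complex.I_sq]
      push_cast
      ring
  simp_rw [integral_smul_const, hval]
  funext l
  have hcoef : (4 * Real.pi * σ) ^ ((d : ℝ) / 2) * (((2 * Real.pi) ^ d : ℝ))⁻¹ *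
      (Real.pi / σ) ^ ((d:ℝ)/2) = 1 := by
    have h2π : (0:ℝ) < 2 * Real.pi := by positivity
    have hAC : (4 * Real.pi * σ) ^ ((d : ℝ) / 2) * (Real.pi / σ) ^ ((d:ℝ)/2)
        = (2 * Real.pi) ^ d := by
      rw [← Real.mul_rpow (by positivity) (by positivity)]
      have h4 : 4 * Real.pi * σ * (Real.pi / σ) = (2 * Real.pi) ^ (2:ℝ) := by
        rw [Real.rpow_two]; field_simp; ring
      rw [h4, ← Real.rpow_mul h2π.le, ← Real.rpow_natCast (2*Real.pi) d]
      congr 1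
      push_cast
      ring
    have hB : ((2 * Real.pi) ^ d : ℝ) ≠ 0 := by positivity
    calc (4 * Real.pi * σ) ^ ((d : ℝ) / 2) * (((2 * Real.pi) ^ d : ℝ))⁻¹ *
          (Real.pi / σ) ^ ((d:ℝ)/2)
        = ((4 * Real.pi * σ) ^ ((d : ℝ) / 2) * (Real.pi / σ) ^ ((d:ℝ)/2)) *
            (((2 * Real.pi) ^ d : ℝ))⁻¹ := by ring
      _ = 1 := by rw [hAC]; field_simp
  have hcoefC : (((4 * Real.pi * σ) ^ ((d : ℝ) / 2) : ℝ) : ℂ) *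
      ((((2 * Real.pi) ^ d : ℝ)):ℂ)⁻¹ * (((Real.pi / σ) ^ ((d:ℝ)/2) : ℝ) : ℂ) = 1 := by
    rw [← Complex.ofReal_inv, ← Complex.ofReal_mul, ← Complex.ofReal_mul, hcoef]
    norm_num
  simp only [Pi.smul_apply, Finset.sum_apply, smul_eq_mul, Finset.smul_sum, Finset.mul_sum]
  refine Finset.sum_congr rfl fun k _ => ?_
  simp only [Pi.smul_apply, smul_eq_mul, Complex.real_smul]
  linear_combination ((h k l : ℂ) * (Real.exp (-‖h k - h j‖^2 / (4*σ)) : ℂ)) * hcoefC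
end

section
/- Exact token retrieval (regularized form of Theorem 1): let h_1, …, h_t be pairwise distinct vectors in ℝ^d. For every index j ∈ {1, …, t}, as σ → 0⁺ the Gaussian-regularized readout (4πσ)^{d/2} ∫_{ℝ^d} S(θ) · conj(w_j(θ)) · e^{−σ‖θ‖²} dθ (a vector in ℂ^d, integrated componentwise) converges to h_j (viewed in ℂ^d via the canonical inclusion ℝ^d ↪ ℂ^d). -/
open MeasureTheory Real Filter RealInnerProductSpace

/-! The product `S(θ) · conj (w_j(θ))` equals `(2π)^{-d} ∑ₖ hₖ e^{i⟨hₖ - h_j, θ⟩}`, so the Gaussian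
Fourier transform turns the normalized readout into the heat-kernel sum
`∑ₖ e^{-‖hₖ - h_j‖² / (4σ)} hₖ`, with no error term. As `σ → 0⁺` the term `k = j` is `h_j`, and
every other term vanishes because `hₖ ≠ h_j`. -/

open Complex ComplexConjugate Topology

lemma rpow_mul_integral_cexp_neg_mul_sq_norm_add_inner
    {V : Type*} [NormedAddCommGroup V] [InnerProductSpace ℝ V] [FiniteDimensional ℝ V]
    [MeasurableSpace V] [BorelSpace V] {σ : ℝ} (hσ : 0 < σ) (v : V) :
    (((4 * π * σ) ^ ((Module.finrank ℝ V : ℝ) / 2) : ℝ) : ℂ) *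
        ∫ θ : V, cexp (-σ * ‖θ‖ ^ 2 + I * ⟪v, θ⟫) =
      (((2 * π) ^ Module.finrank ℝ V * rexp (-‖v‖ ^ 2 / (4 * σ)) : ℝ) : ℂ) := by
  set n := Module.finrank ℝ V
  rw [GaussianFourier.integral_cexp_neg_mul_sq_norm_add (by simpa using hσ),
    ← ofReal_natCast, ← ofReal_ofNat 2, ← ofReal_div, ← ofReal_div,
    ← ofReal_cpow (div_pos pi_pos hσ).le, ← mul_assoc, ← ofReal_mul,
    ← mul_rpow (by positivity) (div_pos pi_pos hσ).le]
  have hsq : 4 * π * σ * (π / σ) = (2 * π) ^ 2 := by field_simp; ring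
  have hexp : I ^ 2 * (‖v‖ : ℂ) ^ 2 / (4 * σ) = ((-‖v‖ ^ 2 / (4 * σ) : ℝ) : ℂ) := by
    push_cast; rw [I_sq]; ring
  have hpow : 2 * (n : ℝ) / 2 = n := by ring
  rw [hsq, ← rpow_natCast _ 2, ← rpow_mul (by positivity), hexp, ← ofReal_exp, ofReal_mul,
    Nat.cast_ofNat, ← mul_div_assoc, hpow, rpow_natCast]

lemma tendsto_exp_neg_div_four_mul_nhdsGT_zero {a : ℝ} (ha : 0 < a) :
    Tendsto (fun σ => rexp (-a / (4 * σ))) (𝓝[>] 0) (𝓝 0) := by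
  refine tendsto_exp_atBot.comp ?_
  refine (tendsto_inv_nhdsGT_zero.const_mul_atTop_of_neg (by linarith : -a / 4 < 0)).congr
    fun σ => ?_
  ring

lemma tendsto_sum_exp_neg_sq_norm_sub_div_smul {ι E F : Type*} [Fintype ι]
    [NormedAddCommGroup E] [NormedAddCommGroup F] [NormedSpace ℝ F] {h : ι → E}
    (hh : Function.Injective h) (c : ι → F) (j : ι) :
    Tendsto (fun σ => ∑ k, rexp (-‖h k - h j‖ ^ 2 / (4 * σ)) • c k) (𝓝[>] 0) (𝓝 (c j)) := by
  classical
  have hterm (k : ι) : Tendsto (fun σ => rexp (-‖h k - h j‖ ^ 2 / (4 * σ)) • c k) (𝓝[>] 0)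
      (𝓝 (if k = j then c j else 0)) := by
    split_ifs with hk
    · subst hk
      simp
    · have hpos : 0 < ‖h k - h j‖ ^ 2 := by
        have := sub_ne_zero.mpr (hh.ne hk)
        positivity
      simpa using (tendsto_exp_neg_div_four_mul_nhdsGT_zero hpos).smul_const (c k)
  simpa using tendsto_finsetSum Finset.univ fun k _ => hterm k

lemma seqSummary_mul_conj_spectralQuery {d t : ℕ} (ht : t ≠ 0)
    (h : Fin t → EuclideanSpace ℝ (Fin d)) (j : Fin t) (θ : EuclideanSpace ℝ (Fin d))
    (l : Fin d) :
    seqSummary h θ l * conj (spectralQuery h j θ) =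
      (((2 * π) ^ d : ℝ) : ℂ)⁻¹ * ∑ k, (h k l : ℂ) * cexp (I * ⟪h k - h j, θ⟫) := by
  have hphase (k : Fin t) : cexp (I * ⟪θ, h k⟫) * conj (cexp (I * ⟪θ, h j⟫)) =
      cexp (I * ⟪h k - h j, θ⟫) := by
    rw [← exp_conj, ← Complex.exp_add, inner_sub_left, real_inner_comm θ, real_inner_comm θ]
    simp only [map_mul, conj_I, conj_ofReal]
    push_cast
    ring_nf
  simp only [seqSummary, spectralQuery, map_mul, map_div₀, conj_I, map_natCast, conj_ofReal,
    Finset.mul_sum, Finset.sum_mul]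
  refine Finset.sum_congr rfl fun k _ => ?_
  rw [← hphase k]
  field_simp
  ring_nf
  rw [I_sq]
  ring

lemma readout_eq_sum_exp_smul {d t : ℕ} (ht : t ≠ 0) (h : Fin t → EuclideanSpace ℝ (Fin d))
    (j : Fin t) {σ : ℝ} (hσ : 0 < σ) :
    ((4 * π * σ) ^ ((d : ℝ) / 2) : ℝ) •
        ∫ θ : EuclideanSpace ℝ (Fin d),
          (fun l : Fin d =>
            seqSummary h θ l * conj (spectralQuery h j θ) * (rexp (-σ * ‖θ‖ ^ 2) : ℂ)) =
      ∑ k, rexp (-‖h k - h j‖ ^ 2 / (4 * σ)) • (fun l : Fin d => (h k l : ℂ)) := by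
  have hintegrand : (fun θ : EuclideanSpace ℝ (Fin d) => fun l : Fin d =>
        seqSummary h θ l * conj (spectralQuery h j θ) * (rexp (-σ * ‖θ‖ ^ 2) : ℂ)) =
      fun θ => (((2 * π) ^ d : ℝ) : ℂ)⁻¹ •
        ∑ k, cexp (-σ * ‖θ‖ ^ 2 + I * ⟪h k - h j, θ⟫) • (fun l : Fin d => (h k l : ℂ)) := by
    funext θ l
    simp only [seqSummary_mul_conj_spectralQuery ht, Pi.smul_apply, Finset.sum_apply,
      smul_eq_mul, Finset.mul_sum, Finset.sum_mul, Complex.exp_add, ofReal_exp]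
    refine Finset.sum_congr rfl fun k _ => ?_
    push_cast
    ring
  have hσ' : 0 < (σ : ℂ).re := by simpa using hσ
  rw [hintegrand, integral_smul, integral_finsetSum _ fun k _ =>
    (GaussianFourier.integrable_cexp_neg_mul_sq_norm_add hσ' I _).smul_const _]
  simp only [integral_smul_const, Finset.smul_sum, ← Complex.coe_smul, smul_smul]
  refine Finset.sum_congr rfl fun k _ => ?_
  congr 1
  have := rpow_mul_integral_cexp_neg_mul_sq_norm_add_inner hσ (h k - h j)
  rw [finrank_euclideanSpace_fin] at this
  rw [mul_left_comm, this]
  push_cast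
  field_simp

/-- **Exact token retrieval (regularized form of Theorem 1).**
For pairwise distinct `h₁, …, h_t ∈ ℝ^d` and every index `j`, as `σ → 0⁺` the
Gaussian-regularized readout `(4πσ)^{d/2} ∫ S(θ) * conj (w_j θ) * e^{−σ‖θ‖²} dθ`
(componentwise in `ℂ^d`) converges to `h_j`. -/
theorem exact_token_retrieval
    (d t : ℕ) (ht : 0 < t) (h : Fin t → EuclideanSpace ℝ (Fin d))
    (hdist : Function.Injective h) (j : Fin t) :
    Tendsto
      (fun σ : ℝ =>
        ((4 * Real.pi * σ) ^ ((d : ℝ) / 2) : ℝ) •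
          ∫ θ : EuclideanSpace ℝ (Fin d),
            (fun l : Fin d =>
              seqSummary h θ l * (starRingEnd ℂ) (spectralQuery h j θ) *
                (Real.exp (-σ * ‖θ‖ ^ 2) : ℂ)))
      (nhdsWithin 0 (Set.Ioi 0))
      (nhds (fun l : Fin d => (h j l : ℂ))) := by
  refine (tendsto_sum_exp_neg_sq_norm_sub_div_smul hdist (fun k l => (h k l : ℂ)) j).congr' ?_
  filter_upwards [self_mem_nhdsWithin] with σ hσ
  exact (readout_eq_sum_exp_smul ht.ne' h j hσ).symm
end
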